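/- arXiv:1206.5365 — 3 statements merged into one kernel-verified Lean document; each statement's English description precedes it below -/
import Mathlib

section
/- For every integer r ≥ 1 and every real x with 0 ≤ x < 1, the series ∑_{d=r+1}^{∞} (1/(d−1)) · I_{d−r,r}(x) converges and equals −ln(1−x). -/
/-!
Induction on `r`. For `r = 1` we have `I_{n+1,1}(x) = x ^ (n + 1)`, and the series is Mercator's
series for `-log (1 - x)`. Splitting off the term `j = a` gives
`I_{a,b+1} = I_{a+1,b} + C(a+b,a) x^a (1-x)^b`, so the series for `r + 1` is the series for `r`
without its first term, plus `(1-x)^r / r` times the negative binomial series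
`∑ C(n+r, r-1) x^(n+1) = (1-x)^(-r) - 1`. The dropped first term `I_{1,r}(x) / r` equals
`(1 - (1-x)^r) / r`, which is exactly that correction.
-/

/-- The regularized incomplete beta function with positive integer parameters `a`, `b`. -/
noncomputable def incBeta (a b : ℕ) (x : ℝ) : ℝ :=
  ∑ j ∈ Finset.Icc a (a + b - 1),
    (Nat.choose (a + b - 1) j : ℝ) * x ^ j * (1 - x) ^ (a + b - 1 - j)

open Finset Real

theorem incBeta_zero_left (b : ℕ) (x : ℝ) : incBeta 0 b x = 1 := by
  rw [incBeta, zero_add, ← Nat.range_succ_eq_Icc_zero]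
  calc _ = (x + (1 - x)) ^ (b - 1) := by rw [add_pow]; exact sum_congr rfl fun j _ ↦ by ring
    _ = 1 := by rw [add_sub_cancel, one_pow]

theorem incBeta_one_right (a : ℕ) (x : ℝ) : incBeta a 1 x = x ^ a := by
  simp [incBeta]

theorem incBeta_succ_right (a b : ℕ) (x : ℝ) :
    incBeta a (b + 1) x = incBeta (a + 1) b x + (a + b).choose a * x ^ a * (1 - x) ^ b := by
  rw [incBeta, incBeta, show a + (b + 1) - 1 = a + b by omega,
    show a + 1 + b - 1 = a + b by omega, ← insert_Icc_add_one_left_eq_Icc (by omega),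
    sum_insert (by simp), add_comm, Nat.add_sub_cancel_left]

theorem incBeta_one_left (b : ℕ) (x : ℝ) : incBeta 1 b x = 1 - (1 - x) ^ b := by
  have h := incBeta_succ_right 0 b x
  rw [incBeta_zero_left, zero_add, Nat.choose_zero_right, Nat.cast_one, pow_zero, one_mul,
    one_mul] at h
  linarith

theorem hasSum_choose_mul_pow_succ {𝕜 : Type*} [NormedDivisionRing 𝕜] [HasSummableGeomSeries 𝕜]
    (k : ℕ) {x : 𝕜} (hx : ‖x‖ < 1) :
    HasSum (fun n : ℕ ↦ ((n + 1 + k).choose k : 𝕜) * x ^ (n + 1)) (1 / (1 - x) ^ (k + 1) - 1) := by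
  have h := hasSum_choose_mul_geometric_of_norm_lt_one k hx
  rwa [← hasSum_nat_add_iff' 1, sum_range_one, zero_add, Nat.choose_self, Nat.cast_one, pow_zero,
    mul_one] at h

theorem Nat.cast_choose_div_succ {K : Type*} [Field K] [CharZero K] (a b : ℕ) :
    ((a + b + 1).choose a : K) / (a + b + 1) = ((a + b).choose b : K) / (b + 1) := by
  have h := Nat.add_one_mul_choose_eq (a + b) b
  rw [div_eq_div_iff (by exact_mod_cast (a + b).succ_ne_zero) (by exact_mod_cast b.succ_ne_zero),
    show (a + b + 1).choose a = (a + b + 1).choose (b + 1) from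
      Nat.choose_symm_add (a := a) (b := b + 1)]
  exact_mod_cast h.symm.trans (mul_comm _ _)

theorem div_mul_incBeta_succ_right (n k : ℕ) (x : ℝ) :
    1 / ((n : ℝ) + ((k + 2 : ℕ) : ℝ)) * incBeta (n + 1) (k + 2) x =
      1 / (((n + 1 : ℕ) : ℝ) + ((k + 1 : ℕ) : ℝ)) * incBeta (n + 2) (k + 1) x +
        (1 - x) ^ (k + 1) / (k + 1) * ((n + 1 + k).choose k * x ^ (n + 1)) := by
  have h := Nat.cast_choose_div_succ (K := ℝ) (n + 1) k
  rw [incBeta_succ_right (n + 1) (k + 1), ← add_assoc (n + 1) k 1]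
  push_cast at h ⊢
  linear_combination (x ^ (n + 1) * (1 - x) ^ (k + 1)) * h

theorem hasSum_div_mul_incBeta (k : ℕ) {x : ℝ} (hx : |x| < 1) :
    HasSum (fun n : ℕ ↦ 1 / ((n : ℝ) + ((k + 1 : ℕ) : ℝ)) * incBeta (n + 1) (k + 1) x)
      (-log (1 - x)) := by
  induction k with
  | zero =>
    convert hasSum_pow_div_log_of_abs_lt_one hx using 2 with n
    rw [incBeta_one_right]
    push_cast
    ring
  | succ k ih =>
    have tail := (hasSum_nat_add_iff' 1).2 ih
    have binom := (hasSum_choose_mul_pow_succ k (x := x) (by rwa [Real.norm_eq_abs])).mul_left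
      ((1 - x) ^ (k + 1) / (k + 1))
    have first : 1 / (((0 : ℕ) : ℝ) + ((k + 1 : ℕ) : ℝ)) * incBeta (0 + 1) (k + 1) x =
        (1 - x) ^ (k + 1) / (k + 1) * (1 / (1 - x) ^ (k + 1) - 1) := by
      have hpow : (1 - x) ^ (k + 1) ≠ 0 := pow_ne_zero _ (by linarith [abs_lt.1 hx])
      rw [zero_add, incBeta_one_left]
      push_cast
      field_simp
      ring
    have hsum := (tail.add binom).congr_fun fun n ↦ div_mul_incBeta_succ_right n k x
    rwa [sum_range_one, first, sub_add_cancel] at hsum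

/-- The sum over `d` is reindexed by `d = n + r + 1`. -/
theorem sum_incBeta_eq_neg_log (r : ℕ) (hr : 1 ≤ r) (x : ℝ) (hx0 : 0 ≤ x) (hx1 : x < 1) :
    HasSum (fun n : ℕ => (1 / ((n : ℝ) + (r : ℝ))) * incBeta (n + 1) r x)
      (- Real.log (1 - x)) := by
  obtain ⟨k, rfl⟩ := Nat.exists_eq_add_of_le' hr
  exact hasSum_div_mul_incBeta k (abs_lt.2 ⟨by linarith, hx1⟩)
end

section
/- Let M ≥ 1 be an integer and η ∈ (0,1), and let d, r be integers with 1 ≤ r ≤ M, d ≥ r+2, and d·η ≥ M. Then for all x with 0 < x ≤ 1−η, d·I_{d−r,r}(x) ≤ (d−1)·I_{d−1−r,r}(x). -/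
open Finset

lemma incBeta_eq_sum_range (a b : ℕ) (hab : 0 < a + b) (x : ℝ) :
    incBeta a b x = ∑ i ∈ range b,
      ((a + b - 1).choose (a + i) : ℝ) * x ^ (a + i) * (1 - x) ^ (b - 1 - i) := by
  have hIcc : Icc a (a + b - 1) = Ico a (a + b) := by
    ext j
    simp only [mem_Icc, mem_Ico]
    omega
  rw [incBeta, hIcc, sum_Ico_eq_sum_range, Nat.add_sub_cancel_left]
  refine sum_congr rfl fun i _ => ?_
  rw [show a + b - 1 - (a + i) = b - 1 - i by omega]

lemma add_mul_incBeta_succ_le (a b : ℕ) (hab : 0 < a + b) {x : ℝ} (hx : 0 ≤ x)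
    (h : ((a : ℝ) + 1 + b) * x ≤ a + 1) :
    ((a : ℝ) + 1 + b) * incBeta (a + 1) b x ≤ ((a : ℝ) + b) * incBeta a b x := by
  have hx1 : x ≤ 1 := by
    refine le_of_mul_le_mul_left (a := (a : ℝ) + 1 + b) ?_ (by positivity)
    linarith [(Nat.cast_nonneg b : (0 : ℝ) ≤ b)]
  rw [incBeta_eq_sum_range (a + 1) b (by omega), incBeta_eq_sum_range a b hab,
    show a + 1 + b - 1 = a + b by omega, mul_sum, mul_sum]
  refine sum_le_sum fun i hi => ?_
  rw [mem_range] at hi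
  have hchoose : ((a + b : ℕ) : ℝ) * (a + b - 1).choose (a + i)
      = (a + b).choose (a + 1 + i) * (a + 1 + i : ℕ) := by
    have h := Nat.add_one_mul_choose_eq (a + b - 1) (a + i)
    rw [show a + b - 1 + 1 = a + b by omega, show a + i + 1 = a + 1 + i by omega] at h
    exact_mod_cast h
  have hcoeff : ((a : ℝ) + 1 + b) * x ≤ (a + 1 + i : ℕ) := by
    push_cast
    linarith [(Nat.cast_nonneg i : (0 : ℝ) ≤ i)]
  have hrest : (0 : ℝ) ≤ (a + b).choose (a + 1 + i) * (x ^ (a + i) * (1 - x) ^ (b - 1 - i)) := by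
    have : (0 : ℝ) ≤ 1 - x := by linarith
    positivity
  push_cast at hchoose
  calc ((a : ℝ) + 1 + b) * ((a + b).choose (a + 1 + i) * x ^ (a + 1 + i) * (1 - x) ^ (b - 1 - i))
      = ((a + 1 + b) * x) * ((a + b).choose (a + 1 + i) * (x ^ (a + i) * (1 - x) ^ (b - 1 - i))) := by
        ring
    _ ≤ (a + 1 + i : ℕ) * ((a + b).choose (a + 1 + i) * (x ^ (a + i) * (1 - x) ^ (b - 1 - i))) :=
        mul_le_mul_of_nonneg_right hcoeff hrest
    _ = (a + b) * ((a + b - 1).choose (a + i) * x ^ (a + i) * (1 - x) ^ (b - 1 - i)) := by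
        push_cast
        linear_combination (-(x ^ (a + i) * (1 - x) ^ (b - 1 - i))) * hchoose

theorem d_incBeta_decreasing_general (M : ℕ) (η : ℝ)
    (d r : ℕ) (hrM : r ≤ M) (hd : r + 2 ≤ d)
    (hdη : (M : ℝ) ≤ (d : ℝ) * η)
    (x : ℝ) (hx0 : 0 < x) (hx1 : x ≤ 1 - η) :
    (d : ℝ) * incBeta (d - r) r x ≤ ((d : ℝ) - 1) * incBeta (d - 1 - r) r x := by
  obtain ⟨a, rfl⟩ : ∃ a, d = a + 1 + r := ⟨d - r - 1, by omega⟩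
  rw [show a + 1 + r - r = a + 1 by omega, show a + 1 + r - 1 - r = a by omega]
  have hrM_real : (r : ℝ) ≤ M := by exact_mod_cast hrM
  have hdx : ((a : ℝ) + 1 + r) * x ≤ a + 1 := by
    push_cast at hdη
    linarith [mul_le_mul_of_nonneg_left hx1 (by positivity : (0 : ℝ) ≤ a + 1 + r)]
  have key := add_mul_incBeta_succ_le a r (by omega) hx0.le hdx
  push_cast
  convert key using 2
  ring

theorem d_incBeta_decreasing (M : ℕ) (hM : 1 ≤ M) (η : ℝ) (hη0 : 0 < η) (hη1 : η < 1)
    (d r : ℕ) (hr1 : 1 ≤ r) (hrM : r ≤ M) (hd : r + 2 ≤ d)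
    (hdη : (M : ℝ) ≤ (d : ℝ) * η)
    (x : ℝ) (hx0 : 0 < x) (hx1 : x ≤ 1 - η) :
    (d : ℝ) * incBeta (d - r) r x ≤ ((d : ℝ) - 1) * incBeta (d - 1 - r) r x :=
  d_incBeta_decreasing_general M η d r hrM hd hdη x hx0 hx1
end

section
/- Let M ≥ 1 be an integer, η ∈ (0,1), and let r′, D be integers with 1 ≤ r′ ≤ M, D ≥ r′+1, and (D+1)·η ≥ M. Then for all x with 0 < x ≤ 1−η, the series ∑_{d=D+1}^{∞} (1/(d−1)) · I_{d−r′,r′}(x) converges and is strictly less than I_{D−r′,r′}(x). -/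
open Finset Filter Topology

noncomputable def binomTerm (m k : ℕ) (x : ℝ) : ℝ :=
  (m.choose k : ℝ) * x ^ (m - k) * (1 - x) ^ k

/-- `P(Bin(m, 1 - x) < r)`. -/
noncomputable def binomLowerTail (r m : ℕ) (x : ℝ) : ℝ :=
  ∑ k ∈ range r, binomTerm m k x

theorem incBeta_eq_binomLowerTail (a s : ℕ) (x : ℝ) :
    incBeta a (s + 1) x = binomLowerTail (s + 1) (a + s) x := by
  rw [incBeta, binomLowerTail, ← Nat.add_assoc, Nat.add_sub_cancel]
  refine sum_nbij' (fun j => a + s - j) (fun k => a + s - k) ?_ ?_ ?_ ?_ ?_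
  all_goals intro j hj; simp only [mem_Icc, mem_range] at hj ⊢
  any_goals omega
  rw [binomTerm, Nat.sub_sub_self hj.2, Nat.choose_symm hj.2]

section binomTerm

variable {m k : ℕ} {x : ℝ}

theorem binomTerm_nonneg (hx0 : 0 ≤ x) (hx1 : x ≤ 1) : 0 ≤ binomTerm m k x := by
  unfold binomTerm
  have : 0 ≤ 1 - x := sub_nonneg.2 hx1
  positivity

theorem binomTerm_pos (hk : k ≤ m) (hx0 : 0 < x) (hx1 : x < 1) : 0 < binomTerm m k x := by
  unfold binomTerm
  have : 0 < 1 - x := sub_pos.2 hx1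
  have : (0 : ℝ) < m.choose k := by exact_mod_cast Nat.choose_pos hk
  positivity

theorem binomTerm_succ_sub_mul (hk : k < m) :
    (binomTerm m (k + 1) x - binomTerm m k x) * ((k + 1) * x)
      = binomTerm m k x * ((m + 1) * (1 - x) - (k + 1)) := by
  obtain ⟨j, rfl⟩ := Nat.exists_eq_add_of_lt hk
  have hchoose : ((k + j + 1).choose (k + 1) : ℝ) * (k + 1) = (k + j + 1).choose k * (j + 1) := by
    exact_mod_cast Nat.choose_succ_right_eq (k + j + 1) k |>.trans (by congr 1; omega)
  simp only [binomTerm, show k + j + 1 - k = j + 1 by omega, show k + j + 1 - (k + 1) = j by omega]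
  push_cast
  linear_combination x * x ^ j * (1 - x) ^ k * (1 - x) * hchoose

theorem binomTerm_le_binomTerm_succ (hx0 : 0 < x) (h : (k + 1 : ℝ) ≤ (m + 1) * (1 - x)) :
    binomTerm m k x ≤ binomTerm m (k + 1) x := by
  have hx1 : x < 1 := by nlinarith
  have hk : k < m := by exact_mod_cast (show (k : ℝ) < m by nlinarith)
  have key := binomTerm_succ_sub_mul (x := x) hk
  have : 0 ≤ binomTerm m k x * ((m + 1) * (1 - x) - (k + 1)) :=
    mul_nonneg (binomTerm_nonneg hx0.le hx1.le) (sub_nonneg.2 h)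
  exact sub_nonneg.1 (nonneg_of_mul_nonneg_left (key ▸ this) (by positivity))

theorem binomTerm_lt_binomTerm_succ (hx0 : 0 < x) (h : (k + 1 : ℝ) < (m + 1) * (1 - x)) :
    binomTerm m k x < binomTerm m (k + 1) x := by
  have hx1 : x < 1 := by nlinarith
  have hk : k < m := by exact_mod_cast (show (k : ℝ) < m by nlinarith)
  have key := binomTerm_succ_sub_mul (x := x) hk
  have : 0 < binomTerm m k x * ((m + 1) * (1 - x) - (k + 1)) :=
    mul_pos (binomTerm_pos hk.le hx0 hx1) (sub_pos.2 h)
  exact sub_pos.1 (pos_of_mul_pos_left (key ▸ this) (by positivity))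

theorem binomTerm_le_of_le {r : ℕ} (hx0 : 0 < x) (hkr : k ≤ r) (h : (r : ℝ) ≤ (m + 1) * (1 - x)) :
    binomTerm m k x ≤ binomTerm m r x := by
  induction r, hkr using Nat.le_induction with
  | base => exact le_rfl
  | succ r _ ih =>
    push_cast at h
    exact (ih (by linarith)).trans (binomTerm_le_binomTerm_succ hx0 h)

theorem tendsto_binomTerm_atTop (k : ℕ) (hx0 : 0 < x) (hx1 : x < 1) :
    Tendsto (fun m => binomTerm m k x) atTop (𝓝 0) := by
  have hlim := (tendsto_pow_const_mul_const_pow_of_lt_one k hx0.le hx1).const_mul ((1 - x) ^ k / x ^ k)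
  rw [mul_zero] at hlim
  refine squeeze_zero' (Eventually.of_forall fun m => binomTerm_nonneg hx0.le hx1.le) ?_ hlim
  filter_upwards [eventually_ge_atTop k] with m hm
  have hchoose : (m.choose k : ℝ) ≤ (m : ℝ) ^ k := by exact_mod_cast Nat.choose_le_pow m k
  have hpow : x ^ (m - k) = x ^ m / x ^ k := by
    rw [eq_div_iff (by positivity), ← pow_add, Nat.sub_add_cancel hm]
  have : 0 ≤ 1 - x := sub_nonneg.2 hx1.le
  calc binomTerm m k x ≤ (m : ℝ) ^ k * x ^ (m - k) * (1 - x) ^ k := by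
        unfold binomTerm; gcongr
    _ = (1 - x) ^ k / x ^ k * ((m : ℝ) ^ k * x ^ m) := by rw [hpow]; ring

theorem add_one_mul_binomTerm_add_one {n s : ℕ} :
    (s + 1) * binomTerm (n + 1) (s + 1) x = (n + 1) * ((1 - x) * binomTerm n s x) := by
  have hchoose : ((n + 1 : ℕ) : ℝ) * n.choose s = (n + 1).choose (s + 1) * ((s + 1 : ℕ) : ℝ) := by
    exact_mod_cast Nat.add_one_mul_choose_eq n s
  push_cast at hchoose
  simp only [binomTerm, Nat.add_sub_add_right]
  linear_combination -(x ^ (n - s) * (1 - x) ^ (s + 1)) * hchoose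

theorem binomTerm_add_one_zero {n : ℕ} : binomTerm (n + 1) 0 x = x * binomTerm n 0 x := by
  simp [binomTerm, pow_succ, mul_comm]

theorem binomTerm_add_one_add_one {n s : ℕ} (hs : s < n) :
    binomTerm (n + 1) (s + 1) x = (1 - x) * binomTerm n s x + x * binomTerm n (s + 1) x := by
  obtain ⟨j, rfl⟩ := Nat.exists_eq_add_of_lt hs
  simp only [binomTerm, Nat.choose_succ_succ', show s + j + 1 + 1 - (s + 1) = j + 1 by omega,
    show s + j + 1 - s = j + 1 by omega, show s + j + 1 - (s + 1) = j by omega]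
  push_cast
  ring

end binomTerm

section binomLowerTail

variable {r m : ℕ} {x : ℝ}

theorem binomLowerTail_le (hx0 : 0 < x) (h : (r : ℝ) ≤ (m + 1) * (1 - x)) :
    binomLowerTail r m x ≤ r * binomTerm m r x := by
  calc binomLowerTail r m x ≤ ∑ _k ∈ range r, binomTerm m r x :=
        sum_le_sum fun k hk => binomTerm_le_of_le hx0 (mem_range.1 hk).le h
    _ = r * binomTerm m r x := by simp

theorem binomLowerTail_lt {s : ℕ} (hx0 : 0 < x) (h : (s + 1 : ℝ) < (m + 1) * (1 - x)) :
    binomLowerTail (s + 1) m x < (s + 1) * binomTerm m (s + 1) x := by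
  calc binomLowerTail (s + 1) m x < ∑ _k ∈ range (s + 1), binomTerm m (s + 1) x := by
        refine sum_lt_sum (fun k hk => binomTerm_le_of_le hx0 (mem_range.1 hk).le (by exact_mod_cast h.le))
          ⟨s, self_mem_range_succ s, binomTerm_lt_binomTerm_succ hx0 h⟩
    _ = (s + 1) * binomTerm m (s + 1) x := by simp

theorem binomLowerTail_sub_succ {s n : ℕ} (hs : s ≤ n) :
    binomLowerTail (s + 1) n x - binomLowerTail (s + 1) (n + 1) x = (1 - x) * binomTerm n s x := by
  induction s with
  | zero =>
    rw [binomLowerTail, binomLowerTail, zero_add, sum_range_one, sum_range_one, binomTerm_add_one_zero]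
    ring
  | succ s ih =>
    simp only [binomLowerTail, sum_range_succ _ (s + 1)] at ih ⊢
    rw [binomTerm_add_one_add_one hs]
    linear_combination ih (by omega)

theorem tendsto_binomLowerTail_atTop (r : ℕ) (hx0 : 0 < x) (hx1 : x < 1) :
    Tendsto (fun m => binomLowerTail r m x) atTop (𝓝 0) := by
  simpa [binomLowerTail] using tendsto_finsetSum (range r) fun k _ => tendsto_binomTerm_atTop k hx0 hx1

theorem binomLowerTail_nonneg (hx0 : 0 ≤ x) (hx1 : x ≤ 1) :
    0 ≤ binomLowerTail r m x :=
  sum_nonneg fun _ _ => binomTerm_nonneg hx0 hx1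

theorem binomLowerTail_div_le_sub {s n : ℕ} (hx0 : 0 < x)
    (h : (s + 1 : ℝ) ≤ (n + 2) * (1 - x)) :
    binomLowerTail (s + 1) (n + 1) x / (n + 1)
      ≤ binomLowerTail (s + 1) n x - binomLowerTail (s + 1) (n + 1) x := by
  have hs : s < n + 1 := by exact_mod_cast (show (s : ℝ) < n + 1 by nlinarith)
  replace hs : s ≤ n := Nat.lt_succ_iff.1 hs
  rw [binomLowerTail_sub_succ hs, div_le_iff₀ (by positivity), mul_comm, ← add_one_mul_binomTerm_add_one]
  exact_mod_cast binomLowerTail_le hx0 (by push_cast; linarith)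

theorem binomLowerTail_div_lt_sub {s n : ℕ} (hx0 : 0 < x)
    (h : (s + 1 : ℝ) < (n + 2) * (1 - x)) :
    binomLowerTail (s + 1) (n + 1) x / (n + 1)
      < binomLowerTail (s + 1) n x - binomLowerTail (s + 1) (n + 1) x := by
  have hs : s < n + 1 := by exact_mod_cast (show (s : ℝ) < n + 1 by nlinarith)
  replace hs : s ≤ n := Nat.lt_succ_iff.1 hs
  rw [binomLowerTail_sub_succ hs, div_lt_iff₀ (by positivity), mul_comm, ← add_one_mul_binomTerm_add_one]
  exact binomLowerTail_lt hx0 (by push_cast; linarith)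

end binomLowerTail

theorem hasSum_sub_succ_of_tendsto {f : ℕ → ℝ} {l : ℝ} (hf : ∀ n, f (n + 1) ≤ f n)
    (h : Tendsto f atTop (𝓝 l)) : HasSum (fun n => f n - f (n + 1)) (f 0 - l) :=
  (hasSum_iff_tendsto_nat_of_nonneg (fun n => sub_nonneg.2 (hf n)) _).2 <| by
    simpa only [sum_range_sub'] using tendsto_const_nhds.sub h

theorem exists_hasSum_lt_of_le_sub_succ {f G : ℕ → ℝ} {i : ℕ} (hf : ∀ n, 0 ≤ f n)
    (hle : ∀ n, f n ≤ G n - G (n + 1)) (hlt : f i < G i - G (i + 1))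
    (hG : Tendsto G atTop (𝓝 0)) : ∃ L, HasSum f L ∧ L < G 0 := by
  have htel : HasSum (fun n => G n - G (n + 1)) (G 0) := by
    simpa using hasSum_sub_succ_of_tendsto (fun n => sub_nonneg.1 ((hf n).trans (hle n))) hG
  have hsum : HasSum f (∑' n, f n) := (htel.summable.of_nonneg_of_le hf hle).hasSum
  exact ⟨_, hsum, hasSum_lt hle hlt hsum htel⟩

theorem tail_sum_lt_incBeta_general (M : ℕ) (η : ℝ)
    (r' D : ℕ) (hr1 : 1 ≤ r') (hrM : r' ≤ M) (hD : r' + 1 ≤ D)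
    (hDη : (M : ℝ) ≤ ((D : ℝ) + 1) * η)
    (x : ℝ) (hx0 : 0 < x) (hx1 : x ≤ 1 - η) :
    ∃ L : ℝ,
      HasSum (fun n : ℕ => (1 / ((n : ℝ) + (D : ℝ))) * incBeta (n + (D + 1 - r')) r' x) L ∧
      L < incBeta (D - r') r' x := by
  obtain ⟨s, rfl⟩ : ∃ s, r' = s + 1 := ⟨r' - 1, by omega⟩
  obtain ⟨d, rfl⟩ : ∃ d, D = d + 1 := ⟨D - 1, by omega⟩
  have hmode : (s + 1 : ℝ) ≤ (d + 2) * (1 - x) := by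
    have hsM : (s + 1 : ℝ) ≤ M := by exact_mod_cast hrM
    push_cast at hDη
    nlinarith
  have hx1' : x < 1 := by nlinarith
  obtain ⟨L, hL, hLlt⟩ := exists_hasSum_lt_of_le_sub_succ (i := 1)
    (G := fun n => binomLowerTail (s + 1) (d + n) x)
    (fun n => div_nonneg (binomLowerTail_nonneg hx0.le hx1'.le) (by positivity))
    (fun n => binomLowerTail_div_le_sub (n := d + n) hx0 (by push_cast; nlinarith))
    (binomLowerTail_div_lt_sub (n := d + 1) hx0 (by push_cast; nlinarith))
    ((tendsto_binomLowerTail_atTop (s + 1) hx0 hx1').comp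
      ((tendsto_add_atTop_nat d).congr fun n => add_comm n d))
  have hterm (n : ℕ) : 1 / ((n : ℝ) + ((d + 1 : ℕ) : ℝ)) * incBeta (n + (d + 1 + 1 - (s + 1))) (s + 1) x
      = binomLowerTail (s + 1) (d + n + 1) x / ((d + n : ℕ) + 1) := by
    rw [incBeta_eq_binomLowerTail, show n + (d + 1 + 1 - (s + 1)) + s = d + n + 1 by omega]
    push_cast
    ring
  refine ⟨L, by simpa only [hterm] using hL, ?_⟩
  rwa [incBeta_eq_binomLowerTail, show d + 1 - (s + 1) + s = d + 0 by omega]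

/-- The tail series `∑_{d=D+1}^∞ (1/(d-1)) I_{d-r',r'}(x)` (reindexed by `d = n + D + 1`)
converges and its sum is strictly less than `I_{D-r',r'}(x)`. -/
theorem tail_sum_lt_incBeta (M : ℕ) (hM : 1 ≤ M) (η : ℝ) (hη0 : 0 < η) (hη1 : η < 1)
    (r' D : ℕ) (hr1 : 1 ≤ r') (hrM : r' ≤ M) (hD : r' + 1 ≤ D)
    (hDη : (M : ℝ) ≤ ((D : ℝ) + 1) * η)
    (x : ℝ) (hx0 : 0 < x) (hx1 : x ≤ 1 - η) :
    ∃ L : ℝ,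
      HasSum (fun n : ℕ => (1 / ((n : ℝ) + (D : ℝ))) * incBeta (n + (D + 1 - r')) r' x) L ∧
      L < incBeta (D - r') r' x :=
  tail_sum_lt_incBeta_general M η r' D hr1 hrM hD hDη x hx0 hx1
end
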